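/- arXiv:2408.12967 — 3 statements merged into one kernel-verified Lean document; each statement's English description precedes it below -/
import Mathlib

section
/- (Single common due date feasibility) Consider a finite set J of jobs with processing times p_j ≥ 1, release dates r_j, and a common due date d. If for every job j it holds that the sum of p_{j'} over all jobs j' with r_{j'} ≥ r_j is at most d - r_j, then there exists a schedule in which all jobs are early, i.e., an injective assignment of disjoint execution intervals with each job starting at or after its release date and completing by time d. -/
/-!
Order the jobs by release date, breaking ties by index, and schedule them back to back so that
the last one completes exactly at `d`. A job then starts at `d` minus the total processing time of
itself and all later jobs; the hypothesis bounds that total by `d - r j`, so no job starts before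
its release date.
-/

open Finset

section TailSum

variable {ι α β : Type*} [Fintype ι] [LinearOrder α] [LinearOrder β]

def tailSum (key : ι → α) (p : ι → ℕ) (j : ι) : ℕ :=
  ∑ j' ∈ univ.filter (fun j' => key j ≤ key j'), p j'

lemma le_tailSum (key : ι → α) (p : ι → ℕ) (j : ι) : p j ≤ tailSum key p j :=
  single_le_sum (fun _ _ => Nat.zero_le _) (by simp)

lemma tailSum_le_tailSum {key : ι → α} {key' : ι → β} (p : ι → ℕ) {j : ι}
    (h : ∀ j', key j ≤ key j' → key' j ≤ key' j') : tailSum key p j ≤ tailSum key' p j :=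
  sum_le_sum_of_subset fun j' => by simpa using h j'

lemma tailSum_add_le_of_lt {key : ι → α} (p : ι → ℕ) {i j : ι} (h : key i < key j) :
    tailSum key p j + p i ≤ tailSum key p i := by
  have hi : i ∉ univ.filter (fun j' => key j ≤ key j') := by simpa using h
  calc tailSum key p j + p i
        = ∑ j' ∈ (univ.filter (fun j' => key j ≤ key j')).cons i hi, p j' := by
        rw [sum_cons, add_comm, tailSum]
    _ ≤ tailSum key p i := sum_le_sum_of_subset fun j' => by
        simp only [mem_cons, mem_filter, mem_univ, true_and]
        rintro (rfl | hj')
        exacts [le_rfl, h.le.trans hj']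

lemma disjoint_Ico_sub_tailSum {key : ι → α} (hkey : Function.Injective key) (p : ι → ℕ)
    {d : ℕ} (hd : ∀ j, tailSum key p j ≤ d) {i j : ι} (hij : i ≠ j) :
    Disjoint (Set.Ico (d - tailSum key p i) (d - tailSum key p i + p i))
      (Set.Ico (d - tailSum key p j) (d - tailSum key p j + p j)) := by
  rw [Set.Ico_disjoint_Ico]
  have := hd i
  have := hd j
  rcases lt_or_gt_of_ne (hkey.ne hij) with h | h <;>
    · have := tailSum_add_le_of_lt p h
      omega

end TailSum

/-- Single common due date feasibility (sufficiency). -/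
theorem stmt_2 (n : ℕ) (p r : Fin n → ℕ) (hp : ∀ j, 1 ≤ p j) (d : ℕ)
    (hfeas : ∀ j, ∑ j' ∈ Finset.univ.filter (fun j' => r j ≤ r j'), p j' ≤ d - r j) :
    ∃ σ : Fin n → ℕ,
      (∀ j, r j ≤ σ j) ∧
      (∀ i j, i ≠ j →
        Disjoint (Set.Ico (σ i) (σ i + p i)) (Set.Ico (σ j) (σ j + p j))) ∧
      (∀ j, σ j + p j ≤ d) := by
  let key : Fin n → ℕ ×ₗ Fin n := fun j => toLex (r j, j)
  have hkey : Function.Injective key := fun i j h => congrArg Prod.snd (toLex.injective h)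
  have hS : ∀ j, r j + tailSum key p j ≤ d := fun j => by
    have h_le : tailSum key p j ≤ tailSum r p j :=
      tailSum_le_tailSum p fun j' h => Prod.Lex.monotone_fst _ _ h
    have h_feas : tailSum r p j ≤ d - r j := hfeas j
    have := le_tailSum key p j
    have := hp j
    omega
  refine ⟨fun j => d - tailSum key p j, fun j => ?_,
    fun i j => disjoint_Ico_sub_tailSum hkey p fun j => ?_, fun j => ?_⟩
  all_goals have := hS j; have := le_tailSum key p j; beta_reduce; omega
end

section
/- (Bin Packing to scheduling, forward direction) Let items 1..m have sizes s_i and let there be b bins of capacity B. Construct a scheduling instance with: for each item i, a job with processing time s_i, release date 0, and due date bB + b - 1; and for each k ∈ {1,…,b-1}, a separator job with processing time 1, release date kB + k - 1, and due date kB + k. If the items can be partitioned into b parts each of total size at most B, then there is a schedule of all these jobs in which every job is early. -/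
/-!
Cut the time axis into `b` windows of length `B + 1`. The items of bin `k` are run back to
back, in index order, from time `k (B + 1)`; they finish by `k (B + 1) + B` because the bin has
total size at most `B`. The `k`-th separator then fills the last unit `[k (B + 1) + B, (k + 1) (B + 1))`
of window `k`, which is exactly its release-to-due interval.
-/

open Finset

section ClassPrefixSum

variable {ι κ : Type*} [Fintype ι] [LinearOrder ι] [DecidableEq κ]

def classPrefixSum (f : ι → κ) (s : ι → ℕ) (i : ι) : ℕ :=
  ∑ j ∈ univ.filter (fun j => f j = f i ∧ j < i), s j

lemma classPrefixSum_add_self (f : ι → κ) (s : ι → ℕ) (i : ι) :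
    classPrefixSum f s i + s i = ∑ j ∈ univ.filter (fun j => f j = f i ∧ j ≤ i), s j := by
  have hsplit : univ.filter (fun j => f j = f i ∧ j ≤ i) =
      insert i (univ.filter (fun j => f j = f i ∧ j < i)) := by
    ext j
    simp only [mem_filter, mem_univ, true_and, mem_insert, le_iff_lt_or_eq]
    constructor
    · rintro ⟨hj, hlt | rfl⟩
      exacts [Or.inr ⟨hj, hlt⟩, Or.inl rfl]
    · rintro (rfl | ⟨hj, hlt⟩)
      exacts [⟨rfl, Or.inr rfl⟩, ⟨hj, Or.inl hlt⟩]
  rw [hsplit, sum_insert (by simp), add_comm]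
  rfl

lemma classPrefixSum_add_self_le (f : ι → κ) (s : ι → ℕ) (i : ι) :
    classPrefixSum f s i + s i ≤ ∑ j ∈ univ.filter (fun j => f j = f i), s j := by
  rw [classPrefixSum_add_self]
  exact sum_le_sum_of_subset fun j => by simp +contextual

lemma classPrefixSum_add_self_le_of_lt (f : ι → κ) (s : ι → ℕ) {i j : ι}
    (hf : f i = f j) (hij : i < j) :
    classPrefixSum f s i + s i ≤ classPrefixSum f s j := by
  rw [classPrefixSum_add_self]
  refine sum_le_sum_of_subset fun k hk => ?_
  simp only [mem_filter, mem_univ, true_and] at hk ⊢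
  exact ⟨hk.1.trans hf, hk.2.trans_lt hij⟩

lemma disjoint_Ico_classPrefixSum (f : ι → κ) (s : ι → ℕ) {i j : ι}
    (hf : f i = f j) (hij : i ≠ j) :
    Disjoint (Set.Ico (classPrefixSum f s i) (classPrefixSum f s i + s i))
      (Set.Ico (classPrefixSum f s j) (classPrefixSum f s j + s j)) := by
  rw [Set.Ico_disjoint_Ico]
  rcases hij.lt_or_gt with h | h
  · have := classPrefixSum_add_self_le_of_lt f s hf h
    omega
  · have := classPrefixSum_add_self_le_of_lt f s hf.symm h
    omega

end ClassPrefixSum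

lemma add_mul_add_le_mul {L w w' o p : ℕ} (hfit : o + p ≤ L) (hw : w < w') :
    w * L + o + p ≤ w' * L := by
  have := Nat.mul_le_mul_right L hw
  rw [Nat.succ_mul] at this
  omega

lemma disjoint_Ico_windows {ι : Type*} {L : ℕ} {w o p : ι → ℕ} (hfit : ∀ j, o j + p j ≤ L)
    (hsame : ∀ i j, i ≠ j → w i = w j →
      Disjoint (Set.Ico (o i) (o i + p i)) (Set.Ico (o j) (o j + p j)))
    {i j : ι} (hij : i ≠ j) :
    Disjoint (Set.Ico (w i * L + o i) (w i * L + o i + p i))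
      (Set.Ico (w j * L + o j) (w j * L + o j + p j)) := by
  rw [Set.Ico_disjoint_Ico]
  rcases lt_trichotomy (w i) (w j) with h | h | h
  · have := add_mul_add_le_mul (hfit i) h
    omega
  · have := hsame i j hij h
    rw [Set.Ico_disjoint_Ico] at this
    rw [h]
    omega
  · have := add_mul_add_le_mul (hfit j) h
    omega

/-- Bin Packing to scheduling, forward direction. -/
theorem stmt_8 (m b B : ℕ) (s : Fin m → ℕ)
    (hpack : ∃ f : Fin m → Fin b,
      ∀ k : Fin b, ∑ i ∈ Finset.univ.filter (fun i => f i = k), s i ≤ B) :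
    let P : Fin m ⊕ Fin (b - 1) → ℕ := Sum.elim s (fun _ => 1)
    let R : Fin m ⊕ Fin (b - 1) → ℕ :=
      Sum.elim (fun _ => 0) (fun k => (k.val + 1) * B + k.val)
    let D : Fin m ⊕ Fin (b - 1) → ℕ :=
      Sum.elim (fun _ => b * B + b - 1) (fun k => (k.val + 1) * B + k.val + 1)
    ∃ σ : Fin m ⊕ Fin (b - 1) → ℕ,
      (∀ j, R j ≤ σ j) ∧
      (∀ i j, i ≠ j →
        Disjoint (Set.Ico (σ i) (σ i + P i)) (Set.Ico (σ j) (σ j + P j))) ∧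
      (∀ j, σ j + P j ≤ D j) := by
  intro P R D
  obtain ⟨f, hf⟩ := hpack
  have hitem (i : Fin m) : classPrefixSum f s i + s i ≤ B :=
    (classPrefixSum_add_self_le f s i).trans (hf (f i))
  let w : Fin m ⊕ Fin (b - 1) → ℕ := Sum.elim (fun i => f i) (fun k => k)
  let o : Fin m ⊕ Fin (b - 1) → ℕ := Sum.elim (classPrefixSum f s) (fun _ => B)
  have hfit (j) : o j + P j ≤ B + 1 := by
    cases j with
    | inl i => exact (hitem i).trans B.le_succ
    | inr k => rfl
  refine ⟨fun j => w j * (B + 1) + o j, ?_, fun i j hij => disjoint_Ico_windows hfit ?_ hij, ?_⟩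
  · rintro (i | k)
    · exact Nat.zero_le _
    · show (k.val + 1) * B + k.val ≤ k.val * (B + 1) + B
      exact le_of_eq (by ring)
  · rintro (i | k) (j | k') hne hw
    · exact disjoint_Ico_classPrefixSum f s (Fin.ext hw) (fun h => hne (h ▸ rfl))
    · simp only [Set.Ico_disjoint_Ico, o, P, Sum.elim_inl, Sum.elim_inr]
      have := hitem i
      omega
    · simp only [Set.Ico_disjoint_Ico, o, P, Sum.elim_inl, Sum.elim_inr]
      have := hitem j
      omega
    · exact absurd (congrArg Sum.inr (Fin.ext hw)) hne
  · rintro (i | k)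
    · have := add_mul_add_le_mul (hitem i) (f i).isLt
      simp only [P, D, o, w, Sum.elim_inl, Nat.mul_succ] at this ⊢
      omega
    · show k.val * (B + 1) + B + 1 ≤ (k.val + 1) * B + k.val + 1
      exact le_of_eq (by ring)
end

section
/- (Bin Packing to scheduling, backward direction) In the scheduling instance constructed from a Bin Packing instance with b bins of capacity B (item jobs with processing time s_i, release date 0, due date bB+b-1; separator jobs with processing time 1, release date kB+k-1, due date kB+k for k=1,…,b-1), if there is a schedule in which all jobs are early, then the items can be partitioned into b parts each of total size at most B. -/
/-!
Cut the time line into windows `[q (B + 1), q (B + 1) + B)`, `q < b`, of length `B`. Release and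
due dates pin separator `q` to the single slot `q (B + 1) + B` between windows `q` and `q + 1`,
and the common due date of the items is the end of the last window. So a nonempty item job
cannot cross a window boundary and lies in the window of its start time; putting each item in
the bin of its window, the items of one bin occupy disjoint intervals inside a window of
length `B`.
-/

open Finset

theorem sum_le_of_pairwiseDisjoint_Ico_subset {ι : Type*} {T : Finset ι} {a l : ι → ℕ} {c L : ℕ}
    (hdisj : (T : Set ι).PairwiseDisjoint fun i => Ico (a i) (a i + l i))
    (hsub : ∀ i ∈ T, Ico (a i) (a i + l i) ⊆ Ico c (c + L)) :
    ∑ i ∈ T, l i ≤ L :=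
  calc ∑ i ∈ T, l i = ∑ i ∈ T, #(Ico (a i) (a i + l i)) := by simp
    _ = #(T.biUnion fun i => Ico (a i) (a i + l i)) := (card_biUnion hdisj).symm
    _ ≤ #(Ico c (c + L)) := card_le_card (biUnion_subset.mpr hsub)
    _ = L := by simp

theorem Ico_subset_window_of_not_mem {B t p : ℕ}
    (h : t / (B + 1) * (B + 1) + B ∉ Ico t (t + p)) :
    Ico t (t + p) ⊆ Ico (t / (B + 1) * (B + 1)) (t / (B + 1) * (B + 1) + B) := by
  have hle : t / (B + 1) * (B + 1) ≤ t := Nat.div_mul_le_self t (B + 1)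
  have hmod : t % (B + 1) < B + 1 := Nat.mod_lt t B.succ_pos
  have hdiv : t % (B + 1) + t / (B + 1) * (B + 1) = t := Nat.mod_add_div' t (B + 1)
  rw [mem_Ico] at h
  exact Ico_subset_Ico hle (by omega)

theorem Ico_subset_window_of_separators {b B t p : ℕ} (hdue : t + p ≤ b * B + b - 1)
    (hsep : ∀ q, q + 1 < b → q * (B + 1) + B ∉ Ico t (t + p)) :
    Ico t (t + p) ⊆ Ico (t / (B + 1) * (B + 1)) (t / (B + 1) * (B + 1) + B) := by
  apply Ico_subset_window_of_not_mem
  by_cases hq : t / (B + 1) + 1 < b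
  · exact hsep _ hq
  · have hlast : b * (B + 1) ≤ t / (B + 1) * (B + 1) + (B + 1) := by
      simpa only [add_one_mul] using Nat.mul_le_mul_right (B + 1) (show b ≤ t / (B + 1) + 1 by omega)
    rw [← mul_add_one] at hdue
    rw [mem_Ico]
    omega

theorem div_succ_lt_of_add_le {b B t p : ℕ} (hb : 1 ≤ b) (h : t + p ≤ b * B + b - 1) :
    t / (B + 1) < b := by
  have hpos : 0 < (B + 1) * b := Nat.mul_pos B.succ_pos hb
  rw [← mul_add_one, mul_comm] at h
  exact Nat.div_lt_of_lt_mul (by omega)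

/-- Bin Packing to scheduling, backward direction. -/
theorem stmt_10 (m b B : ℕ) (hb : 1 ≤ b) (s : Fin m → ℕ)
    (hsched : ∃ σ : Fin m ⊕ Fin (b - 1) → ℕ,
      (∀ j, Sum.elim (fun _ : Fin m => 0)
        (fun k : Fin (b - 1) => (k.val + 1) * B + k.val) j ≤ σ j) ∧
      (∀ i j, i ≠ j →
        Disjoint
          (Set.Ico (σ i) (σ i + Sum.elim s (fun _ => 1) i))
          (Set.Ico (σ j) (σ j + Sum.elim s (fun _ => 1) j))) ∧
      (∀ j, σ j + Sum.elim s (fun _ => 1) j ≤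
        Sum.elim (fun _ : Fin m => b * B + b - 1)
          (fun k : Fin (b - 1) => (k.val + 1) * B + k.val + 1) j)) :
    ∃ f : Fin m → Fin b,
      ∀ k : Fin b, ∑ i ∈ Finset.univ.filter (fun i => f i = k), s i ≤ B := by
  obtain ⟨σ, hrel, hdisj, hdue⟩ := hsched
  have hdisjoint : ∀ i j, i ≠ j → Disjoint
      (Ico (σ i) (σ i + Sum.elim s (fun _ => 1) i)) (Ico (σ j) (σ j + Sum.elim s (fun _ => 1) j)) :=
    fun i j hij => by simpa only [← coe_Ico, disjoint_coe] using hdisj i j hij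
  have hsep_start (k : Fin (b - 1)) : σ (.inr k) = k * (B + 1) + B := by
    have hr := hrel (.inr k)
    have hd := hdue (.inr k)
    simp only [Sum.elim_inr] at hr hd
    linarith
  have hwindow (i : Fin m) : Ico (σ (.inl i)) (σ (.inl i) + s i) ⊆
      Ico (σ (.inl i) / (B + 1) * (B + 1)) (σ (.inl i) / (B + 1) * (B + 1) + B) := by
    refine Ico_subset_window_of_separators (hdue (.inl i)) fun q hq hmem => ?_
    have hsep := hdisjoint (.inl i) (.inr ⟨q, by omega⟩) Sum.inl_ne_inr
    simp only [Sum.elim_inl, Sum.elim_inr, hsep_start] at hsep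
    exact disjoint_left.mp hsep hmem (by simp)
  have hbin (i : Fin m) : σ (.inl i) / (B + 1) < b := div_succ_lt_of_add_le hb (hdue (.inl i))
  refine ⟨fun i => ⟨_, hbin i⟩, fun k =>
    sum_le_of_pairwiseDisjoint_Ico_subset (a := fun i => σ (.inl i)) (c := k * (B + 1)) ?_ ?_⟩
  · exact fun i _ j _ hij => hdisjoint (.inl i) (.inl j) (Sum.inl_injective.ne hij)
  · intro i hi
    obtain rfl : (⟨_, hbin i⟩ : Fin b) = k := (mem_filter.mp hi).2
    exact hwindow i
end
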